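/- arXiv:1901.03908 — 4 statements merged into one kernel-verified Lean document; each statement's English description precedes it below -/
import Mathlib

section
/- Let k ∈ ℕ, k ≥ 2, f ∈ C^{(r)}(I) with I = [a,b], let ω(t) = ω_k(f^{(r)}, t; I) denote the k-th modulus of smoothness of f^{(r)} on I, and let x, x_σ ∈ I with 0 < |x - x_σ| ≤ |I| where |I| = b - a. Set δ = |I| · (|x - x_σ|/|I|)^{1/k}. Then ∫_{|x-x_σ|}^{2|I|} ω(t)/t² dt ≤ (1 + 2^{2k-1}/(k-1)) · ω(δ)/|x - x_σ|. -/
open scoped BigOperators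

open Classical in
/-- Divided difference with possibly repeated knots, via derivative data `F`
(`F j` is the `j`-th derivative). -/
noncomputable def divDiff (F : ℕ → ℝ → ℝ) : List ℝ → ℝ
  | [] => 0
  | [x] => F 0 x
  | x :: y :: l =>
      if h : ∀ z ∈ y :: l, z = x then
        F ((y :: l).length) x / Nat.factorial ((y :: l).length)
      else
        (divDiff F (y :: l) -
          divDiff F (x :: (y :: l).eraseIdx ((y :: l).findIdx (fun z => z ≠ x)))) /
          ((y :: l).getD ((y :: l).findIdx (fun z => z ≠ x)) 0 - x)
termination_by l => l.length
decreasing_by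
  · simp
  · push_neg at h
    obtain ⟨z, hz, hzx⟩ := h
    have hlt : (y :: l).findIdx (fun z => decide (z ≠ x)) < (y :: l).length :=
      List.findIdx_lt_length_of_exists ⟨z, hz, by simpa using hzx⟩
    simp only [List.length_cons, List.length_eraseIdx] at *
    rw [if_pos hlt]; omega

/-- Newton form of the Hermite interpolation polynomial at the knots `xs`. -/
noncomputable def newtonSum (F : ℕ → ℝ → ℝ) (xs : List ℝ) (t : ℝ) : ℝ :=
  ∑ j ∈ Finset.range xs.length,
    divDiff F (xs.take (j + 1)) * ∏ i ∈ Finset.range j, (t - xs.getD i 0)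

/-- The `k`-th symmetric difference of `g`, set to `0` when the relevant points
leave `[a,b]`. -/
noncomputable def kSymmDiff (k : ℕ) (g : ℝ → ℝ) (u x a b : ℝ) : ℝ :=
  if a ≤ x - (k / 2 : ℝ) * u ∧ x + (k / 2 : ℝ) * u ≤ b then
    ∑ i ∈ Finset.range (k + 1), (-1 : ℝ) ^ i * (k.choose i) * g (x + ((k : ℝ) / 2 - i) * u)
  else 0

/-- The `k`-th modulus of smoothness of `g` on `[a,b]`. -/
noncomputable def smoothOmega (k : ℕ) (g : ℝ → ℝ) (t a b : ℝ) : ℝ :=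
  sSup {v : ℝ | ∃ u x : ℝ, 0 < u ∧ u ≤ t ∧ v = |kSymmDiff k g u x a b|}

/-- First modulus of continuity of `g` on `[a,b]`. -/
noncomputable def omega1 (g : ℝ → ℝ) (t a b : ℝ) : ℝ :=
  sSup {v : ℝ | ∃ x y : ℝ, x ∈ Set.Icc a b ∧ y ∈ Set.Icc a b ∧ |x - y| ≤ t ∧ v = |g x - g y|}

/-- Sup norm on `[a,b]`. -/
noncomputable def supNorm (g : ℝ → ℝ) (a b : ℝ) : ℝ :=
  sSup {v : ℝ | ∃ x ∈ Set.Icc a b, v = |g x|}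

/-- The knots extended by `x₋₁ = x₀ - (xₘ - x₀)` and `x_{m+1} = xₘ + (xₘ - x₀)`. -/
noncomputable def xExt (m : ℕ) (x : ℕ → ℝ) : ℤ → ℝ := fun i =>
  if i < 0 then x 0 - (x m - x 0) else if (m : ℤ) < i then x m + (x m - x 0) else x i.toNat

/-- `d(p,q) = min (x_{q+1} - x_p) (x_q - x_{p-1})`. -/
noncomputable def dpq (m : ℕ) (x : ℕ → ℝ) (p q : ℕ) : ℝ :=
  min (xExt m x ((q : ℤ) + 1) - x p) (x q - xExt m x ((p : ℤ) - 1))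

/-- `Λ_{p,q,r}(x_0,…,x_m; φ)`. -/
noncomputable def Lam (m r : ℕ) (x : ℕ → ℝ) (φ : ℝ → ℝ) (p q : ℕ) : ℝ :=
  (∫ u in Set.Ioc (x q - x p) (dpq m x p q), u ^ ((p : ℤ) + r - q - 1) * φ u) /
    ((∏ i ∈ Finset.range p, (x q - x i)) * ∏ i ∈ Finset.Ioc q m, (x i - x p))

/-- `Λ_r(x_0,…,x_m; φ) = max over admissible (p,q) of Λ_{p,q,r}`. -/
noncomputable def LamMax (m r : ℕ) (x : ℕ → ℝ) (φ : ℝ → ℝ) : ℝ :=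
  sSup {v : ℝ | ∃ p q : ℕ, q ≤ m ∧ p + r + 1 ≤ q ∧ v = Lam m r x φ p q}

/-!
Split the integral at `δ`, where `h = |x - xs|` and `δ ^ k = |I| ^ (k - 1) * h`, so `h ≤ δ ≤ |I|`.
On `[h, δ]` monotonicity gives `ω t ≤ ω δ`, and `∫ t⁻²` contributes `ω δ / h`. On `[δ, 2|I|]`
the doubling inequality `ω (2t) ≤ 2 ^ k ω t`, which comes from the identity
`Δ_{2u}^k g y = ∑ j, C(k, j) Δ_u^k g (y + j u)`, yields `ω t ≤ 2 ^ k (t / δ) ^ k ω δ`; integrating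
`t ^ (k - 2)` then gives `2 ^ k ω δ (2|I|) ^ (k - 1) / ((k - 1) δ ^ k)`, which the choice of `δ`
turns into `2 ^ (2k - 1) ω δ / ((k - 1) h)`.
-/

open Finset Set MeasureTheory

section ForwardDifference

open fwdDiff_aux

variable {M G : Type*} [AddCommMonoid M] [AddCommGroup G]

lemma fwdDiffₗ_add_self (h : M) :
    fwdDiffₗ M G (h + h) = fwdDiffₗ M G h * (shiftₗ M G h + 1) := by
  ext f y
  simp only [Module.End.mul_apply, LinearMap.add_apply, Module.End.one_apply, coe_fwdDiffₗ,
    fwdDiff, Pi.add_apply, shiftₗ_apply, add_assoc]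
  abel

lemma fwdDiff_iter_add_self (h : M) (f : M → G) (n : ℕ) (y : M) :
    (fwdDiff (h + h))^[n] f y =
      ∑ j ∈ range (n + 1), n.choose j • (fwdDiff h)^[n] f (y + j • h) := by
  have hcomm : Commute (fwdDiffₗ M G h) (shiftₗ M G h + 1) :=
    ((Commute.refl _).add_right (Commute.one_right _)).add_right (Commute.one_right _)
  rw [← coe_fwdDiffₗ_pow, fwdDiffₗ_add_self, hcomm.mul_pow, (hcomm.pow_pow n n).eq,
    Module.End.mul_apply, (Commute.one_right _).add_pow, LinearMap.sum_apply, Finset.sum_apply]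
  refine sum_congr rfl fun j _ => ?_
  rw [one_pow, mul_one, Module.End.mul_apply, Module.End.natCast_apply, map_nsmul,
    Pi.smul_apply, shiftₗ_pow_apply, coe_fwdDiffₗ_pow]

end ForwardDifference

section ModulusOfSmoothness

variable {k : ℕ} {g : ℝ → ℝ} {a b : ℝ}

lemma kSymmDiff_add_eq_fwdDiff_iter {u y : ℝ} (hy : a ≤ y) (hyu : y + k * u ≤ b) :
    kSymmDiff k g u (y + k / 2 * u) a b = (fwdDiff u)^[k] g y := by
  rw [kSymmDiff, if_pos ⟨by linarith, by linarith⟩, fwdDiff_iter_eq_sum_shift,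
    ← sum_range_reflect]
  refine sum_congr rfl fun i hi => ?_
  have hik : i ≤ k := Nat.lt_succ_iff.mp (mem_range.mp hi)
  have hpoint : y + k / 2 * u + ((k : ℝ) / 2 - ((k - i : ℕ) : ℝ)) * u = y + i • u := by
    rw [Nat.cast_sub hik, nsmul_eq_mul]; ring
  rw [show k + 1 - 1 - i = k - i by omega, Nat.choose_symm hik, hpoint, zsmul_eq_mul]
  push_cast
  ring

lemma abs_kSymmDiff_le {M : ℝ} (hM : ∀ y ∈ Icc a b, |g y| ≤ M) (hM0 : 0 ≤ M) {u : ℝ}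
    (hu : 0 ≤ u) (x : ℝ) : |kSymmDiff k g u x a b| ≤ 2 ^ k * M := by
  rw [kSymmDiff]
  split_ifs with hx
  · calc _ ≤ ∑ i ∈ range (k + 1),
          |(-1 : ℝ) ^ i * (k.choose i) * g (x + ((k : ℝ) / 2 - i) * u)| :=
          abs_sum_le_sum_abs _ _
      _ ≤ ∑ i ∈ range (k + 1), (k.choose i : ℝ) * M := by
          refine sum_le_sum fun i hi => ?_
          have hik : (i : ℝ) * u ≤ k * u := mul_le_mul_of_nonneg_right
            (by exact_mod_cast Nat.lt_succ_iff.mp (mem_range.mp hi)) hu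
          have hiu : 0 ≤ (i : ℝ) * u := by positivity
          have hmem : x + ((k : ℝ) / 2 - i) * u ∈ Icc a b :=
            ⟨by linarith [hx.1], by linarith [hx.2]⟩
          simpa [abs_mul] using mul_le_mul_of_nonneg_left (hM _ hmem) (k.choose i).cast_nonneg
      _ = 2 ^ k * M := by
          rw [← sum_mul, ← Nat.cast_sum, Nat.sum_range_choose]
          push_cast
          ring
  · simpa using mul_nonneg (by positivity : (0 : ℝ) ≤ 2 ^ k) hM0

lemma abs_kSymmDiff_le_smoothOmega (hg : ∃ M, ∀ y ∈ Icc a b, |g y| ≤ M) {u t : ℝ}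
    (hu : 0 < u) (hut : u ≤ t) (x : ℝ) :
    |kSymmDiff k g u x a b| ≤ smoothOmega k g t a b := by
  obtain ⟨M, hM⟩ := hg
  refine le_csSup ⟨2 ^ k * max M 0, ?_⟩ ⟨u, x, hu, hut, rfl⟩
  rintro _ ⟨u', x', hu', -, rfl⟩
  exact abs_kSymmDiff_le (fun y hy => (hM y hy).trans (le_max_left _ _)) (le_max_right _ _)
    hu'.le x'

lemma smoothOmega_nonneg (t : ℝ) : 0 ≤ smoothOmega k g t a b :=
  Real.sSup_nonneg <| by rintro _ ⟨u, x, -, -, rfl⟩; exact abs_nonneg _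

lemma smoothOmega_le {t C : ℝ}
    (h : ∀ u x, 0 < u → u ≤ t → |kSymmDiff k g u x a b| ≤ C) (hC : 0 ≤ C) :
    smoothOmega k g t a b ≤ C :=
  Real.sSup_le (by rintro _ ⟨u, x, hu, hut, rfl⟩; exact h u x hu hut) hC

lemma monotone_smoothOmega (hg : ∃ M, ∀ y ∈ Icc a b, |g y| ≤ M) :
    Monotone (smoothOmega k g · a b) := fun _ _ ht =>
  smoothOmega_le (fun _ x hu hut => abs_kSymmDiff_le_smoothOmega hg hu (hut.trans ht) x)
    (smoothOmega_nonneg _)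

lemma abs_fwdDiff_iter_le_smoothOmega (hg : ∃ M, ∀ y ∈ Icc a b, |g y| ≤ M) {u t y : ℝ}
    (hu : 0 < u) (hut : u ≤ t) (hy : a ≤ y) (hyu : y + k * u ≤ b) :
    |(fwdDiff u)^[k] g y| ≤ smoothOmega k g t a b := by
  rw [← kSymmDiff_add_eq_fwdDiff_iter hy hyu]
  exact abs_kSymmDiff_le_smoothOmega hg hu hut _

lemma smoothOmega_add_self_le (hg : ∃ M, ∀ y ∈ Icc a b, |g y| ≤ M) (t : ℝ) :
    smoothOmega k g (t + t) a b ≤ 2 ^ k * smoothOmega k g t a b := by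
  have hC : 0 ≤ 2 ^ k * smoothOmega k g t a b := mul_nonneg (by positivity) (smoothOmega_nonneg t)
  refine smoothOmega_le (fun u x hu hut => ?_) hC
  by_cases hx : a ≤ x - (k / 2 : ℝ) * u ∧ x + (k / 2 : ℝ) * u ≤ b
  swap
  · rwa [kSymmDiff, if_neg hx, abs_zero]
  obtain ⟨y, rfl⟩ : ∃ y, x = y + k / 2 * u := ⟨x - k / 2 * u, by ring⟩
  rw [kSymmDiff_add_eq_fwdDiff_iter (by linarith [hx.1]) (by linarith [hx.2]),
    ← add_halves u, fwdDiff_iter_add_self]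
  calc _ ≤ ∑ j ∈ range (k + 1), (k.choose j : ℝ) * smoothOmega k g t a b := by
        refine (abs_sum_le_sum_abs _ _).trans (sum_le_sum fun j hj => ?_)
        have hjk : (j : ℝ) * (u / 2) ≤ k * (u / 2) := mul_le_mul_of_nonneg_right
          (by exact_mod_cast Nat.lt_succ_iff.mp (mem_range.mp hj)) (by positivity)
        have hju : 0 ≤ (j : ℝ) * (u / 2) := by positivity
        rw [nsmul_eq_mul, abs_mul, Nat.abs_cast, nsmul_eq_mul]
        exact mul_le_mul_of_nonneg_left (abs_fwdDiff_iter_le_smoothOmega hg (half_pos hu)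
          (by linarith) (by linarith [hx.1]) (by linarith [hx.2])) (by positivity)
    _ = 2 ^ k * smoothOmega k g t a b := by
        rw [← sum_mul, ← Nat.cast_sum, Nat.sum_range_choose]
        push_cast
        ring

lemma smoothOmega_two_pow_mul_le (hg : ∃ M, ∀ y ∈ Icc a b, |g y| ≤ M) (n : ℕ) (t : ℝ) :
    smoothOmega k g (2 ^ n * t) a b ≤ (2 ^ k) ^ n * smoothOmega k g t a b := by
  induction n with
  | zero => simp
  | succ n ih =>
    calc smoothOmega k g (2 ^ (n + 1) * t) a b
        = smoothOmega k g (2 ^ n * t + 2 ^ n * t) a b := by congr 1; ring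
      _ ≤ 2 ^ k * smoothOmega k g (2 ^ n * t) a b := smoothOmega_add_self_le hg _
      _ ≤ 2 ^ k * ((2 ^ k) ^ n * smoothOmega k g t a b) := by gcongr
      _ = (2 ^ k) ^ (n + 1) * smoothOmega k g t a b := by ring

lemma smoothOmega_le_two_pow_mul_div_pow (hg : ∃ M, ∀ y ∈ Icc a b, |g y| ≤ M) {δ t : ℝ}
    (hδ : 0 < δ) (hδt : δ ≤ t) :
    smoothOmega k g t a b ≤ 2 ^ k * (t / δ) ^ k * smoothOmega k g δ a b := by
  obtain ⟨n, hn, hn1⟩ := exists_nat_pow_near ((one_le_div hδ).2 hδt) one_lt_two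
  calc smoothOmega k g t a b ≤ smoothOmega k g (2 ^ (n + 1) * δ) a b :=
        monotone_smoothOmega hg ((div_lt_iff₀ hδ).1 hn1).le
    _ ≤ (2 ^ k) ^ (n + 1) * smoothOmega k g δ a b := smoothOmega_two_pow_mul_le hg _ _
    _ = 2 ^ k * (2 ^ n) ^ k * smoothOmega k g δ a b := by ring
    _ ≤ 2 ^ k * (t / δ) ^ k * smoothOmega k g δ a b := by
        gcongr
        exact smoothOmega_nonneg _

end ModulusOfSmoothness

section TailIntegral

variable {φ : ℝ → ℝ}

lemma intervalIntegrable_div_sq_of_monotone (hφ : Monotone φ) {s T : ℝ} (hs : 0 < s)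
    (hsT : s ≤ T) : IntervalIntegrable (fun t => φ t / t ^ 2) volume s T := by
  have hinv : ContinuousOn (fun t : ℝ => (t ^ 2)⁻¹) (uIcc s T) :=
    (continuous_pow 2).continuousOn.inv₀ fun t ht => by
      rw [uIcc_of_le hsT] at ht
      exact pow_ne_zero 2 (hs.trans_le ht.1).ne'
  simpa only [div_eq_mul_inv] using hφ.intervalIntegrable.mul_continuousOn hinv

lemma integral_div_sq_le_of_monotone (hφ : Monotone φ) {h δ : ℝ} (hh : 0 < h) (hhδ : h ≤ δ)
    (hφδ : 0 ≤ φ δ) : ∫ t in h..δ, φ t / t ^ 2 ≤ φ δ / h := by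
  have h0 : (0 : ℝ) ∉ uIcc h δ := notMem_uIcc_of_lt hh (hh.trans_le hhδ)
  calc ∫ t in h..δ, φ t / t ^ 2 ≤ ∫ t in h..δ, φ δ * t ^ (-2 : ℤ) := by
        refine intervalIntegral.integral_mono_on hhδ
          (intervalIntegrable_div_sq_of_monotone hφ hh hhδ)
          ((intervalIntegral.intervalIntegrable_zpow (Or.inr h0)).const_mul _) fun t ht => ?_
        rw [zpow_neg, zpow_ofNat, div_eq_mul_inv]
        exact mul_le_mul_of_nonneg_right (hφ ht.2) (by positivity)
    _ = φ δ * (h⁻¹ - δ⁻¹) := by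
        rw [intervalIntegral.integral_const_mul, integral_zpow (Or.inr ⟨by norm_num, h0⟩)]
        congr 1
        norm_num
        ring
    _ ≤ φ δ / h := by
        rw [div_eq_mul_inv]
        exact mul_le_mul_of_nonneg_left (sub_le_self _ (inv_nonneg.2 (hh.trans_le hhδ).le)) hφδ

lemma integral_div_sq_le_of_le_mul_pow (hφ : Monotone φ) {k : ℕ} (hk : 2 ≤ k) {δ T C : ℝ}
    (hδ : 0 < δ) (hδT : δ ≤ T) (hC : 0 ≤ C) (hφC : ∀ t ∈ Icc δ T, φ t ≤ C * t ^ k) :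
    ∫ t in δ..T, φ t / t ^ 2 ≤ C * T ^ (k - 1) / ((k : ℝ) - 1) := by
  have hk1 : (0 : ℝ) < (k : ℝ) - 1 := by
    have : (2 : ℝ) ≤ k := by exact_mod_cast hk
    linarith
  calc ∫ t in δ..T, φ t / t ^ 2 ≤ ∫ t in δ..T, C * t ^ (k - 2) := by
        refine intervalIntegral.integral_mono_on hδT
          (intervalIntegrable_div_sq_of_monotone hφ hδ hδT)
          ((intervalIntegral.intervalIntegrable_pow _).const_mul C) fun t ht => ?_
        rw [div_le_iff₀ (by nlinarith [ht.1]), mul_assoc, ← pow_add, Nat.sub_add_cancel hk]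
        exact hφC t ht
    _ = C * ((T ^ (k - 1) - δ ^ (k - 1)) / ((k : ℝ) - 1)) := by
        rw [intervalIntegral.integral_const_mul, integral_pow, show k - 2 + 1 = k - 1 by omega]
        push_cast [Nat.cast_sub hk]
        ring
    _ ≤ C * T ^ (k - 1) / ((k : ℝ) - 1) := by
        rw [mul_div_assoc]
        gcongr
        exact sub_le_self _ (pow_pos hδ _).le

end TailIntegral

lemma mul_div_rpow_one_div_pow {h L : ℝ} (hh : 0 ≤ h) (hL : 0 < L) {k : ℕ} (hk : k ≠ 0) :
    (L * (h / L) ^ ((1 : ℝ) / k)) ^ k = L ^ (k - 1) * h := by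
  rw [mul_pow, ← Real.rpow_natCast ((h / L) ^ _) k, ← Real.rpow_mul (div_nonneg hh hL.le),
    one_div_mul_cancel (Nat.cast_ne_zero.2 hk), Real.rpow_one]
  obtain ⟨m, rfl⟩ := Nat.exists_eq_succ_of_ne_zero hk
  field_simp
  rw [Nat.succ_sub_one, pow_succ]
  ring

lemma mul_div_rpow_one_div_mem_Icc {h L : ℝ} (hh : 0 < h) (hhL : h ≤ L) {k : ℕ} (hk : k ≠ 0) :
    L * (h / L) ^ ((1 : ℝ) / k) ∈ Icc h L := by
  have hL : 0 < L := hh.trans_le hhL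
  have hpow := mul_div_rpow_one_div_pow hh.le hL hk
  have hnonneg : 0 ≤ L * (h / L) ^ ((1 : ℝ) / k) := by positivity
  constructor
  · refine (pow_le_pow_iff_left₀ hh.le hnonneg hk).1 ?_
    rw [hpow, ← Nat.sub_add_cancel (Nat.one_le_iff_ne_zero.2 hk), pow_succ, Nat.add_sub_cancel]
    gcongr
  · refine (pow_le_pow_iff_left₀ hnonneg hL.le hk).1 ?_
    rw [hpow, ← Nat.sub_add_cancel (Nat.one_le_iff_ne_zero.2 hk), pow_succ, Nat.add_sub_cancel]
    gcongr

theorem stmt4_general (k r : ℕ) (hk : 2 ≤ k) (a b : ℝ) (hab : a < b)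
    (f : ℝ → ℝ) (hf : ContDiffOn ℝ r f (Set.Icc a b))
    (x xs : ℝ)
    (h1 : 0 < |x - xs|) (h2 : |x - xs| ≤ b - a) :
    (∫ t in Set.Ioc |x - xs| (2 * (b - a)),
        smoothOmega k (iteratedDerivWithin r f (Set.Icc a b)) t a b / t ^ 2) ≤
      (1 + 2 ^ (2 * k - 1) / ((k : ℝ) - 1)) *
        smoothOmega k (iteratedDerivWithin r f (Set.Icc a b))
          ((b - a) * (|x - xs| / (b - a)) ^ ((1 : ℝ) / (k : ℝ))) a b / |x - xs| := by
  set g := iteratedDerivWithin r f (Icc a b)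
  set h := |x - xs|
  set δ := (b - a) * (h / (b - a)) ^ ((1 : ℝ) / k)
  have hk0 : k ≠ 0 := by omega
  have hL : 0 < b - a := by linarith
  have hg : ∃ M, ∀ y ∈ Icc a b, |g y| ≤ M := isCompact_Icc.exists_bound_of_continuousOn
    (hf.continuousOn_iteratedDerivWithin le_rfl (uniqueDiffOn_Icc hab))
  have hδk : δ ^ k = (b - a) ^ (k - 1) * h := mul_div_rpow_one_div_pow h1.le hL hk0
  obtain ⟨hhδ, hδL⟩ := mul_div_rpow_one_div_mem_Icc h1 h2 hk0
  have hδ0 : 0 < δ := h1.trans_le hhδ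
  have hω := monotone_smoothOmega (k := k) hg
  set A := smoothOmega k g δ a b
  have hgrowth : ∀ t ∈ Icc δ (2 * (b - a)), smoothOmega k g t a b ≤ 2 ^ k * A / δ ^ k * t ^ k :=
    fun t ht => (smoothOmega_le_two_pow_mul_div_pow hg hδ0 ht.1).trans_eq (by rw [div_pow]; ring)
  rw [← intervalIntegral.integral_of_le (by linarith),
    ← intervalIntegral.integral_add_adjacent_intervals
      (intervalIntegrable_div_sq_of_monotone hω h1 hhδ)
      (intervalIntegrable_div_sq_of_monotone hω hδ0 (by linarith))]
  calc _ ≤ A / h + 2 ^ k * A / δ ^ k * (2 * (b - a)) ^ (k - 1) / ((k : ℝ) - 1) :=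
        add_le_add (integral_div_sq_le_of_monotone hω h1 hhδ (smoothOmega_nonneg _))
          (integral_div_sq_le_of_le_mul_pow hω hk hδ0 (by linarith)
            (div_nonneg (mul_nonneg (by positivity) (smoothOmega_nonneg _)) (by positivity))
            hgrowth)
    _ = _ := by
        rw [hδk, mul_pow, show 2 * k - 1 = k + (k - 1) by omega, pow_add]
        field_simp

/-- bounding the tail integral of the modulus of smoothness. -/
theorem stmt4 (k r : ℕ) (hk : 2 ≤ k) (a b : ℝ) (hab : a < b)
    (f : ℝ → ℝ) (hf : ContDiffOn ℝ r f (Set.Icc a b))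
    (x xs : ℝ) (hx : x ∈ Set.Icc a b) (hxs : xs ∈ Set.Icc a b)
    (h1 : 0 < |x - xs|) (h2 : |x - xs| ≤ b - a) :
    (∫ t in Set.Ioc |x - xs| (2 * (b - a)),
        smoothOmega k (iteratedDerivWithin r f (Set.Icc a b)) t a b / t ^ 2) ≤
      (1 + 2 ^ (2 * k - 1) / ((k : ℝ) - 1)) *
        smoothOmega k (iteratedDerivWithin r f (Set.Icc a b))
          ((b - a) * (|x - xs| / (b - a)) ^ ((1 : ℝ) / (k : ℝ))) a b / |x - xs| :=
  stmt4_general k r hk a b hab f hf x xs h1 h2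
end

section
/- Divided differences with repeated knots are symmetric: for any permutation π of {0,...,m}, [x_{π(0)},...,x_{π(m)}; f] = [x_0,...,x_m; f], provided f has m_j - 1 derivatives at every knot of multiplicity m_j. -/
open scoped BigOperators

/-!
Extend the divided difference from lists to multisets of knots, choosing an arbitrary pair of
distinct knots to recurse on. By strong induction on the number of knots, the recursion then holds
for every pair of distinct knots: for three distinct knots `a, b, c` the quotients built on
`(a, b)` and on `(a, c)` agree, because expanding them one level further gives the same second
divided difference. The list divided difference satisfies the same recursion, so it factors through
the multiset of its knots, which a permutation does not change.
-/

section Multiset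

variable {K : Type*} [Field K] [DecidableEq K]

theorem eq_of_eq_left_of_symm {α β : Type*} {S : Set α} (Q : α → α → β)
    (hsymm : ∀ a b, Q a b = Q b a)
    (hleft : ∀ a ∈ S, ∀ b ∈ S, ∀ c ∈ S, a ≠ b → a ≠ c → Q a b = Q a c)
    {a b a' b' : α} (ha : a ∈ S) (hb : b ∈ S) (ha' : a' ∈ S) (hb' : b' ∈ S)
    (hab : a ≠ b) (ha'b' : a' ≠ b') : Q a b = Q a' b' := by
  rcases eq_or_ne a b' with rfl | hab'
  · rw [hleft a ha b hb a' ha' hab ha'b'.symm, hsymm]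
  · rw [hleft a ha b hb b' hb' hab hab', hsymm,
      hleft b' hb' a ha a' ha' hab'.symm ha'b'.symm, hsymm]

open Classical in
noncomputable def multisetDivDiff (F : ℕ → K → K) (s : Multiset K) : K :=
  if h : ∃ p : K × K, p.1 ∈ s ∧ p.2 ∈ s ∧ p.1 ≠ p.2 then
    (multisetDivDiff F (s.erase h.choose.1) - multisetDivDiff F (s.erase h.choose.2)) /
      (h.choose.2 - h.choose.1)
  else if h₀ : ∃ z, z ∈ s then
    F (Multiset.card s - 1) h₀.choose / (Multiset.card s - 1).factorial
  else 0
termination_by Multiset.card s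
decreasing_by
  · exact Multiset.card_erase_lt_of_mem h.choose_spec.1
  · exact Multiset.card_erase_lt_of_mem h.choose_spec.2.1

variable (F : ℕ → K → K)

theorem multisetDivDiff_zero : multisetDivDiff F 0 = 0 := by
  rw [multisetDivDiff]
  simp

theorem multisetDivDiff_of_forall_eq {s : Multiset K} {x : K} (hx : x ∈ s)
    (hall : ∀ z ∈ s, z = x) :
    multisetDivDiff F s = F (Multiset.card s - 1) x / (Multiset.card s - 1).factorial := by
  have hno_pair : ¬∃ p : K × K, p.1 ∈ s ∧ p.2 ∈ s ∧ p.1 ≠ p.2 := by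
    rintro ⟨p, h₁, h₂, hne⟩
    exact hne ((hall _ h₁).trans (hall _ h₂).symm)
  have hne : ∃ z, z ∈ s := ⟨x, hx⟩
  rw [multisetDivDiff, dif_neg hno_pair, dif_pos hne, hall _ hne.choose_spec]

theorem multisetDivDiff_eq_of_ne {s : Multiset K} {x y : K} (hx : x ∈ s) (hy : y ∈ s)
    (hxy : x ≠ y) :
    multisetDivDiff F s =
      (multisetDivDiff F (s.erase x) - multisetDivDiff F (s.erase y)) / (y - x) := by
  induction hn : Multiset.card s using Nat.strong_induction_on generalizing s x y with
  | _ n ih =>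
  set Q : K → K → K := fun a b =>
    (multisetDivDiff F (s.erase a) - multisetDivDiff F (s.erase b)) / (b - a) with hQ
  have hsymm : ∀ a b, Q a b = Q b a := fun a b => by
    simp only [hQ]
    rw [← neg_sub (multisetDivDiff F (s.erase a)), ← neg_sub b a, neg_div_neg_eq]
  have hleft : ∀ a ∈ s, ∀ b ∈ s, ∀ c ∈ s, a ≠ b → a ≠ c → Q a b = Q a c := by
    intro a ha b hb c hc hab hac
    rcases eq_or_ne b c with rfl | hbc
    · rfl
    have expand : ∀ {u v w : K}, u ∈ s → v ∈ s → w ∈ s → u ≠ v → u ≠ w →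
        v ≠ w → multisetDivDiff F (s.erase u) = (multisetDivDiff F ((s.erase u).erase v) -
          multisetDivDiff F ((s.erase u).erase w)) / (w - v) := fun hu hv hw huv huw hvw =>
      ih _ (hn ▸ Multiset.card_erase_lt_of_mem hu) ((Multiset.mem_erase_of_ne huv.symm).2 hv)
        ((Multiset.mem_erase_of_ne huw.symm).2 hw) hvw rfl
    have ea := expand ha hb hc hab hac hbc
    have eb := expand hb ha hc hab.symm hbc hac
    have ec := expand hc ha hb hac.symm hbc.symm hab
    rw [Multiset.erase_comm s b a] at eb
    rw [Multiset.erase_comm s c a, Multiset.erase_comm s c b] at ec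
    have : b - a ≠ 0 := sub_ne_zero.2 hab.symm
    have : c - a ≠ 0 := sub_ne_zero.2 hac.symm
    have : c - b ≠ 0 := sub_ne_zero.2 hbc.symm
    simp only [hQ]
    rw [ea, eb, ec]
    field_simp
    ring
  have hpair : ∃ p : K × K, p.1 ∈ s ∧ p.2 ∈ s ∧ p.1 ≠ p.2 := ⟨(x, y), hx, hy, hxy⟩
  rw [multisetDivDiff, dif_pos hpair]
  exact eq_of_eq_left_of_symm Q hsymm hleft hpair.choose_spec.1 hpair.choose_spec.2.1 hx hy
    hpair.choose_spec.2.2 hxy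

end Multiset

theorem divDiff_eq_multisetDivDiff (F : ℕ → ℝ → ℝ) (l : List ℝ) :
    divDiff F l = multisetDivDiff F l := by
  induction l using divDiff.induct with
  | case1 => rw [divDiff, Multiset.coe_nil, multisetDivDiff_zero]
  | case2 x => rw [divDiff, multisetDivDiff_of_forall_eq F (x := x) (by simp) (by simp)]; simp
  | case3 x y l hall =>
    rw [divDiff.eq_3, dif_pos hall, multisetDivDiff_of_forall_eq F (x := x) (by simp)]
    · simp
    · simpa using hall
  | case4 x y l hall ih_tail ih_erase =>
    rw [divDiff.eq_3, dif_neg hall, ih_tail, ih_erase]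
    set k := (y :: l).findIdx (fun z => z ≠ x)
    obtain ⟨z, hz, hzx⟩ := not_forall₂.1 hall
    have hk : k < (y :: l).length :=
      List.findIdx_lt_length_of_exists ⟨z, hz, by simpa using hzx⟩
    have hwx : (y :: l)[k] ≠ x := of_decide_eq_true (List.findIdx_getElem (w := hk))
    have htail : ((y :: l : List ℝ) : Multiset ℝ) =
        ((x :: y :: l : List ℝ) : Multiset ℝ).erase x := by
      simp
    have herase : ((x :: (y :: l).eraseIdx k : List ℝ) : Multiset ℝ) =
        ((x :: y :: l : List ℝ) : Multiset ℝ).erase (y :: l)[k] := by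
      rw [← Multiset.cons_coe, ← Multiset.cons_coe,
        ← Multiset.coe_eq_coe.2 (List.getElem_cons_eraseIdx_perm hk), ← Multiset.cons_coe,
        Multiset.erase_cons_tail _ hwx.symm, Multiset.erase_cons_head]
    rw [List.getD_eq_getElem _ _ hk, htail, herase]
    exact (multisetDivDiff_eq_of_ne F (by simp) (by simp [List.getElem_mem]) hwx.symm).symm

theorem divDiff_perm (F : ℕ → ℝ → ℝ) {l₁ l₂ : List ℝ} (h : l₁.Perm l₂) :
    divDiff F l₁ = divDiff F l₂ := by
  rw [divDiff_eq_multisetDivDiff, divDiff_eq_multisetDivDiff, Multiset.coe_eq_coe.2 h]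

theorem stmt8_general (m : ℕ) (x : Fin (m + 1) → ℝ) (f : ℝ → ℝ)
    (π : Equiv.Perm (Fin (m + 1))) :
    divDiff (fun j => iteratedDeriv j f) (List.ofFn fun i => x (π i)) =
      divDiff (fun j => iteratedDeriv j f) (List.ofFn fun i => x i) :=
  divDiff_perm _ (π.ofFn_comp_perm x)

/-- symmetry of divided differences with repeated knots. -/
theorem stmt8 (m : ℕ) (x : Fin (m + 1) → ℝ) (f : ℝ → ℝ)
    (hf : ∀ j : Fin (m + 1),
      ContDiffAt ℝ
        (((Finset.univ.filter fun i : Fin (m + 1) => x i = x j).card : ℕ) - 1) f (x j))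
    (π : Equiv.Perm (Fin (m + 1))) :
    divDiff (fun j => iteratedDeriv j f) (List.ofFn fun i => x (π i)) =
      divDiff (fun j => iteratedDeriv j f) (List.ofFn fun i => x i) :=
  stmt8_general m x f π
end

section
/- With the setup of the expanding index pairs (p_ν, q_ν) as above (starting from (p,q) with q-p ≥ r+1 and q-p+2 ≤ m, k = m-r): for each 1 ≤ ν ≤ m-q+p, d_{ν-1} / (Π_{i=0}^{p_{ν-1}-1}(x_{q_{ν-1}} - x_i) · Π_{i=q_{ν-1}+1}^{m}(x_i - x_{p_{ν-1}})) ≤ 2^k / (Π_{i=0}^{p_ν - 1}(x_{q_ν} - x_i) · Π_{i=q_ν+1}^{m}(x_i - x_{p_ν})), where d_ν = d(p_ν, q_ν) = min{x_{q_ν+1} - x_{p_ν}, x_{q_ν} - x_{p_ν - 1}}. -/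
open scoped BigOperators

/-! A left move `(p, q) ↦ (p - 1, q)` is made when `d(p, q) = x_q - x_{p-1}`; that factor then
leaves the first product and cancels `d(p, q)`, while each new factor `x_i - x_{p-1}` (`q < i`) is at
most `2 (x_i - x_p)`, since `x_q - x_{p-1} ≤ x_{q+1} - x_p ≤ x_i - x_p`. A right move is symmetric.
At most `m - q ≤ k`, resp. `p ≤ k`, factors grow. The extended knots `x_{-1}`, `x_{m+1}` forbid a left
move from `p = 0` and a right move from `q = m`, so along the trajectory `q - p` grows by one per
step and the pair stays admissible. -/

lemma Finset.prod_le_pow_card_mul_prod {ι : Type*} (s : Finset ι) {f g : ι → ℝ} {c : ℝ}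
    (hf : ∀ i ∈ s, 0 ≤ f i) (hfg : ∀ i ∈ s, f i ≤ c * g i) :
    ∏ i ∈ s, f i ≤ c ^ s.card * ∏ i ∈ s, g i := by
  rw [← Finset.prod_const, ← Finset.prod_mul_distrib]
  exact Finset.prod_le_prod hf hfg

lemma div_mul_mul_le_div {a b b' c d : ℝ} (ha : 0 < a) (hb : 0 < b) (hb' : 0 < b') (hd : 0 < d)
    (h : b' ≤ c * b) : d / (a * d * b) ≤ c / (a * b') := by
  rw [div_le_div_iff₀ (by positivity) (by positivity)]
  calc d * (a * b') ≤ d * (a * (c * b)) := by gcongr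
    _ = c * (a * d * b) := by ring

namespace ExpandingPairs

variable {m r p q p' q' : ℕ} {x : ℕ → ℝ}

def LeftMove (m : ℕ) (x : ℕ → ℝ) (p q : ℕ) : Prop :=
  x q - xExt m x ((p : ℤ) - 1) ≤ xExt m x ((q : ℤ) + 1) - x p

def IsStep (m : ℕ) (x : ℕ → ℝ) (p q p' q' : ℕ) : Prop :=
  (LeftMove m x p q → p' = p - 1 ∧ q' = q) ∧ (¬LeftMove m x p q → p' = p ∧ q' = q + 1)

def knotProd (m : ℕ) (x : ℕ → ℝ) (p q : ℕ) : ℝ :=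
  (∏ i ∈ Finset.range p, (x q - x i)) * ∏ i ∈ Finset.Ioc q m, (x i - x p)

lemma xExt_natCast (h : p ≤ m) : xExt m x p = x p := by
  simp only [xExt, if_neg (by omega : ¬((p : ℤ) < 0)), if_neg (by omega : ¬((m : ℤ) < p))]
  rfl

lemma xExt_sub_one (hp : 1 ≤ p) (hpm : p ≤ m + 1) : xExt m x ((p : ℤ) - 1) = x (p - 1) := by
  rw [← xExt_natCast (x := x) (by omega : p - 1 ≤ m)]
  congr 1
  omega

lemma xExt_add_one (h : q < m) : xExt m x ((q : ℤ) + 1) = x (q + 1) := by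
  rw [← xExt_natCast (x := x) (by omega : q + 1 ≤ m)]
  push_cast
  rfl

lemma knot_lt_knot (hmono : ∀ i j : ℕ, i ≤ j → j ≤ m → x i ≤ x j)
    (hmult : ∀ j : ℕ, j + r + 1 ≤ m → x j < x (j + r + 1)) {i j : ℕ}
    (hi : i ≤ p) (hpj : p + r + 1 ≤ j) (hj : j ≤ m) : x i < x j :=
  calc x i ≤ x p := hmono i p hi (by omega)
    _ < x (p + r + 1) := hmult p (by omega)
    _ ≤ x j := hmono _ j hpj hj

lemma prod_range_sub_pos (hmono : ∀ i j : ℕ, i ≤ j → j ≤ m → x i ≤ x j)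
    (hmult : ∀ j : ℕ, j + r + 1 ≤ m → x j < x (j + r + 1)) (hpq : p + r + 1 ≤ q) (hq : q ≤ m) :
    0 < ∏ i ∈ Finset.range p, (x q - x i) :=
  Finset.prod_pos fun _ hi ↦
    sub_pos.2 (knot_lt_knot hmono hmult (Finset.mem_range.1 hi).le hpq hq)

lemma prod_Ioc_sub_pos (hmono : ∀ i j : ℕ, i ≤ j → j ≤ m → x i ≤ x j)
    (hmult : ∀ j : ℕ, j + r + 1 ≤ m → x j < x (j + r + 1)) (hpq : p + r + 1 ≤ q) :
    0 < ∏ i ∈ Finset.Ioc q m, (x i - x p) :=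
  Finset.prod_pos fun i hi ↦ by
    obtain ⟨hqi, him⟩ := Finset.mem_Ioc.1 hi
    exact sub_pos.2 (knot_lt_knot hmono hmult le_rfl (by omega) him)

lemma not_leftMove_zero (hmono : ∀ i j : ℕ, i ≤ j → j ≤ m → x i ≤ x j)
    (hmult : ∀ j : ℕ, j + r + 1 ≤ m → x j < x (j + r + 1)) (hrq : r + 1 ≤ q) (hqm : q < m) :
    ¬LeftMove m x 0 q := by
  have h0q : x 0 < x q := knot_lt_knot hmono hmult le_rfl (by omega) hqm.le
  have hqm' : x (q + 1) ≤ x m := hmono _ _ hqm le_rfl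
  rw [LeftMove, xExt_add_one hqm, Nat.cast_zero, zero_sub, xExt, if_pos (by norm_num)]
  linarith

lemma leftMove_top (hmono : ∀ i j : ℕ, i ≤ j → j ≤ m → x i ≤ x j) (hp : 1 ≤ p) (hpm : p ≤ m) :
    LeftMove m x p m := by
  have h0 : x 0 ≤ x (p - 1) := hmono _ _ (Nat.zero_le _) (by omega)
  have hpm' : x p ≤ x m := hmono _ _ hpm le_rfl
  rw [LeftMove, xExt_sub_one hp (by omega), xExt, if_neg (by omega), if_pos (by omega)]
  linarith

lemma IsStep.cases (hmono : ∀ i j : ℕ, i ≤ j → j ≤ m → x i ≤ x j)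
    (hmult : ∀ j : ℕ, j + r + 1 ≤ m → x j < x (j + r + 1)) (hpq : p + r + 1 ≤ q) (hqm : q ≤ m)
    (hlt : q < m + p) (h : IsStep m x p q p' q') :
    (LeftMove m x p q ∧ 1 ≤ p ∧ p' = p - 1 ∧ q' = q) ∨
      (¬LeftMove m x p q ∧ q < m ∧ p' = p ∧ q' = q + 1) := by
  by_cases hL : LeftMove m x p q
  · have hp : 1 ≤ p := by
      by_contra! hp
      obtain rfl : p = 0 := by omega
      exact not_leftMove_zero hmono hmult (by omega) (by omega) hL
    exact .inl ⟨hL, hp, h.1 hL⟩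
  · have hq : q < m := by
      refine lt_of_le_of_ne hqm ?_
      rintro rfl
      exact hL (leftMove_top hmono (by omega) (by omega))
    exact .inr ⟨hL, hq, h.2 hL⟩

lemma dpq_div_knotProd_le_of_leftMove (hmono : ∀ i j : ℕ, i ≤ j → j ≤ m → x i ≤ x j)
    (hmult : ∀ j : ℕ, j + r + 1 ≤ m → x j < x (j + r + 1)) (hp : 1 ≤ p) (hpq : p + r + 1 ≤ q)
    (hqm : q ≤ m) (hL : LeftMove m x p q) :
    dpq m x p q / knotProd m x p q ≤ 2 ^ (m - r) / knotProd m x (p - 1) q := by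
  rw [LeftMove, xExt_sub_one hp (by omega)] at hL
  have hd : dpq m x p q = x q - x (p - 1) := by
    rw [dpq, xExt_sub_one hp (by omega), min_eq_right hL]
  have hsplit : ∏ i ∈ Finset.range p, (x q - x i) =
      (∏ i ∈ Finset.range (p - 1), (x q - x i)) * (x q - x (p - 1)) := by
    rw [← Finset.prod_range_succ, Nat.sub_add_cancel hp]
  have hfactor : ∀ i ∈ Finset.Ioc q m, x i - x (p - 1) ≤ 2 * (x i - x p) := by
    intro i hi
    obtain ⟨hqi, him⟩ := Finset.mem_Ioc.1 hi
    rw [xExt_add_one (by omega : q < m)] at hL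
    have hqi' : x (q + 1) ≤ x i := hmono _ _ hqi him
    have hpq' : x p ≤ x q := hmono _ _ (by omega) hqm
    linarith
  have hprod : ∏ i ∈ Finset.Ioc q m, (x i - x (p - 1)) ≤
      2 ^ (m - r) * ∏ i ∈ Finset.Ioc q m, (x i - x p) :=
    calc _ ≤ 2 ^ (Finset.Ioc q m).card * ∏ i ∈ Finset.Ioc q m, (x i - x p) :=
          Finset.prod_le_pow_card_mul_prod _
            (fun i hi ↦ (sub_pos.2 (knot_lt_knot hmono hmult (Nat.sub_le p 1)
              (by have := (Finset.mem_Ioc.1 hi).1; omega) (Finset.mem_Ioc.1 hi).2)).le) hfactor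
      _ ≤ 2 ^ (m - r) * ∏ i ∈ Finset.Ioc q m, (x i - x p) := by
          gcongr
          · exact (prod_Ioc_sub_pos hmono hmult hpq).le
          · norm_num
          · simp only [Nat.card_Ioc]; omega
  rw [knotProd, knotProd, hd, hsplit]
  exact div_mul_mul_le_div (prod_range_sub_pos hmono hmult (by omega) hqm)
    (prod_Ioc_sub_pos hmono hmult hpq) (prod_Ioc_sub_pos hmono hmult (by omega))
    (sub_pos.2 (knot_lt_knot hmono hmult (Nat.sub_le p 1) hpq hqm)) hprod

lemma dpq_div_knotProd_le_of_not_leftMove (hmono : ∀ i j : ℕ, i ≤ j → j ≤ m → x i ≤ x j)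
    (hmult : ∀ j : ℕ, j + r + 1 ≤ m → x j < x (j + r + 1)) (hpq : p + r + 1 ≤ q) (hqm : q < m)
    (hR : ¬LeftMove m x p q) :
    dpq m x p q / knotProd m x p q ≤ 2 ^ (m - r) / knotProd m x p (q + 1) := by
  rw [LeftMove, xExt_add_one hqm, not_le] at hR
  have hd : dpq m x p q = x (q + 1) - x p := by
    rw [dpq, xExt_add_one hqm, min_eq_left hR.le]
  have hsplit : ∏ i ∈ Finset.Ioc q m, (x i - x p) =
      (x (q + 1) - x p) * ∏ i ∈ Finset.Ioc (q + 1) m, (x i - x p) := by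
    rw [← Finset.insert_Ioc_add_one_left_eq_Ioc hqm, Finset.prod_insert (by simp)]
  have hfactor : ∀ i ∈ Finset.range p, x (q + 1) - x i ≤ 2 * (x q - x i) := by
    intro i hi
    have hip := Finset.mem_range.1 hi
    rw [xExt_sub_one (by omega) (by omega)] at hR
    have hip' : x i ≤ x (p - 1) := hmono _ _ (by omega) (by omega)
    have hpq' : x p ≤ x q := hmono _ _ (by omega) hqm.le
    linarith
  have hprod : ∏ i ∈ Finset.range p, (x (q + 1) - x i) ≤
      2 ^ (m - r) * ∏ i ∈ Finset.range p, (x q - x i) :=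
    calc _ ≤ 2 ^ (Finset.range p).card * ∏ i ∈ Finset.range p, (x q - x i) :=
          Finset.prod_le_pow_card_mul_prod _
            (fun i hi ↦ (sub_pos.2 (knot_lt_knot hmono hmult (Finset.mem_range.1 hi).le
              (by omega) hqm)).le) hfactor
      _ ≤ 2 ^ (m - r) * ∏ i ∈ Finset.range p, (x q - x i) := by
          gcongr
          · exact (prod_range_sub_pos hmono hmult hpq hqm.le).le
          · norm_num
          · simp only [Finset.card_range]; omega
  have key := div_mul_mul_le_div (prod_Ioc_sub_pos hmono hmult (p := p) (q := q + 1) (by omega))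
    (prod_range_sub_pos hmono hmult hpq hqm.le)
    (prod_range_sub_pos hmono hmult (q := q + 1) (by omega) (by omega))
    (sub_pos.2 (knot_lt_knot hmono hmult (p := p) (j := q + 1) le_rfl (by omega) (by omega)))
    hprod
  rw [knotProd, knotProd, hd, hsplit]
  convert key using 2 <;> ring

lemma IsStep.dpq_div_knotProd_le (hmono : ∀ i j : ℕ, i ≤ j → j ≤ m → x i ≤ x j)
    (hmult : ∀ j : ℕ, j + r + 1 ≤ m → x j < x (j + r + 1)) (hpq : p + r + 1 ≤ q) (hqm : q ≤ m)
    (hlt : q < m + p) (h : IsStep m x p q p' q') :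
    dpq m x p q / knotProd m x p q ≤ 2 ^ (m - r) / knotProd m x p' q' := by
  rcases h.cases hmono hmult hpq hqm hlt with ⟨hL, hp, rfl, rfl⟩ | ⟨hR, hq, rfl, rfl⟩
  · exact dpq_div_knotProd_le_of_leftMove hmono hmult hp hpq hqm hL
  · exact dpq_div_knotProd_le_of_not_leftMove hmono hmult hpq hq hR

lemma trajectory_invariant (hmono : ∀ i j : ℕ, i ≤ j → j ≤ m → x i ≤ x j)
    (hmult : ∀ j : ℕ, j + r + 1 ≤ m → x j < x (j + r + 1)) (hqm : q ≤ m) (hpq : p + r + 1 ≤ q)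
    {P Q : ℕ → ℕ} (hP0 : P 0 = p) (hQ0 : Q 0 = q)
    (hstep : ∀ ν : ℕ, 1 ≤ ν → ν ≤ m - q + p → IsStep m x (P (ν - 1)) (Q (ν - 1)) (P ν) (Q ν))
    {ν : ℕ} (hν : ν ≤ m - q + p) : Q ν + p = P ν + q + ν ∧ Q ν ≤ m := by
  induction ν with
  | zero => exact ⟨by omega, by omega⟩
  | succ ν ih =>
    obtain ⟨hsum, hQm⟩ := ih (by omega)
    have h := hstep (ν + 1) (by omega) hν
    rw [Nat.add_sub_cancel] at h
    rcases h.cases hmono hmult (by omega) hQm (by omega) with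
      ⟨-, hp, hP, hQ⟩ | ⟨-, hq, hP, hQ⟩ <;> omega

end ExpandingPairs

theorem stmt10_general (m r : ℕ) (x : ℕ → ℝ)
    (hmono : ∀ i j : ℕ, i ≤ j → j ≤ m → x i ≤ x j)
    (hmult : ∀ j : ℕ, j + r + 1 ≤ m → x j < x (j + r + 1))
    (p q : ℕ) (hqm : q ≤ m) (hpq : p + r + 1 ≤ q)
    (P Q : ℕ → ℕ) (hP0 : P 0 = p) (hQ0 : Q 0 = q)
    (hrec : ∀ ν : ℕ, 1 ≤ ν → ν ≤ m - q + p →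
      ((x (Q (ν - 1)) - xExt m x ((P (ν - 1) : ℤ) - 1) ≤
          xExt m x ((Q (ν - 1) : ℤ) + 1) - x (P (ν - 1)) →
        P ν = P (ν - 1) - 1 ∧ Q ν = Q (ν - 1)) ∧
       (¬(x (Q (ν - 1)) - xExt m x ((P (ν - 1) : ℤ) - 1) ≤
          xExt m x ((Q (ν - 1) : ℤ) + 1) - x (P (ν - 1))) →
        P ν = P (ν - 1) ∧ Q ν = Q (ν - 1) + 1))) :
    ∀ ν : ℕ, 1 ≤ ν → ν ≤ m - q + p →
      dpq m x (P (ν - 1)) (Q (ν - 1)) /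
          ((∏ i ∈ Finset.range (P (ν - 1)), (x (Q (ν - 1)) - x i)) *
            ∏ i ∈ Finset.Ioc (Q (ν - 1)) m, (x i - x (P (ν - 1)))) ≤
        2 ^ (m - r) /
          ((∏ i ∈ Finset.range (P ν), (x (Q ν) - x i)) *
            ∏ i ∈ Finset.Ioc (Q ν) m, (x i - x (P ν))) := by
  intro ν hν1 hν2
  obtain ⟨hsum, hQm⟩ :=
    ExpandingPairs.trajectory_invariant hmono hmult hqm hpq hP0 hQ0 hrec (ν := ν - 1) (by omega)
  exact ExpandingPairs.IsStep.dpq_div_knotProd_le hmono hmult (by omega) hQm (by omega)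
    (hrec ν hν1 hν2)

/-- the key product inequality (3.11) along the expanding pairs. -/
theorem stmt10 (m r : ℕ) (hr : r + 2 ≤ m) (x : ℕ → ℝ)
    (hmono : ∀ i j : ℕ, i ≤ j → j ≤ m → x i ≤ x j)
    (hmult : ∀ j : ℕ, j + r + 1 ≤ m → x j < x (j + r + 1))
    (p q : ℕ) (hpm : p ≤ m) (hqm : q ≤ m) (hpq : p + r + 1 ≤ q) (hq2 : q + 2 ≤ m + p)
    (P Q : ℕ → ℕ) (hP0 : P 0 = p) (hQ0 : Q 0 = q)
    (hrec : ∀ ν : ℕ, 1 ≤ ν → ν ≤ m - q + p →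
      ((x (Q (ν - 1)) - xExt m x ((P (ν - 1) : ℤ) - 1) ≤
          xExt m x ((Q (ν - 1) : ℤ) + 1) - x (P (ν - 1)) →
        P ν = P (ν - 1) - 1 ∧ Q ν = Q (ν - 1)) ∧
       (¬(x (Q (ν - 1)) - xExt m x ((P (ν - 1) : ℤ) - 1) ≤
          xExt m x ((Q (ν - 1) : ℤ) + 1) - x (P (ν - 1))) →
        P ν = P (ν - 1) ∧ Q ν = Q (ν - 1) + 1))) :
    ∀ ν : ℕ, 1 ≤ ν → ν ≤ m - q + p →
      dpq m x (P (ν - 1)) (Q (ν - 1)) /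
          ((∏ i ∈ Finset.range (P (ν - 1)), (x (Q (ν - 1)) - x i)) *
            ∏ i ∈ Finset.Ioc (Q (ν - 1)) m, (x i - x (P (ν - 1)))) ≤
        2 ^ (m - r) /
          ((∏ i ∈ Finset.range (P ν), (x (Q ν) - x i)) *
            ∏ i ∈ Finset.Ioc (Q ν) m, (x i - x (P ν))) :=
  stmt10_general m r x hmono hmult p q hqm hpq P Q hP0 hQ0 hrec
end

section
/- Let x_0 ≤ x_1 ≤ ... ≤ x_{m-1}, x ∈ [x_0, x_{m-1}], and σ a permutation of {0,...,m-1} ordering the knots by increasing distance from x. Suppose p and r are indices with 0 ≤ p ≤ m-r-2 and x ∈ (x_p, x_{p+r}). Then |x - x_{σ_r}| ≤ max{x - x_p, x_{p+r} - x} ≤ x_{p+r} - x_p. -/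
open scoped BigOperators

/-! Of the `r + 1` knots `x_p, …, x_{p+r}` at most `r` are among the `r` knots `x_{σ 0}, …,
x_{σ (r-1)}` nearest to `t`, so some `x_j` with `p ≤ j ≤ p + r` is at least as far from `t` as
`x_{σ r}`; and every point of `[x_p, x_{p+r}]` is within `max (t - x_p) (x_{p+r} - t)` of `t`. -/

theorem Function.Surjective.exists_le_val_apply_mem {α : Type*} [DecidableEq α] {m r : ℕ}
    {σ : Fin m → α} (hσ : Function.Surjective σ) {S : Finset α} (hS : r < S.card) :
    ∃ i : Fin m, r ≤ (i : ℕ) ∧ σ i ∈ S := by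
  by_contra! h
  have hsub : S ⊆ (Finset.univ.filter fun i : Fin m => (i : ℕ) < r).image σ := by
    intro a ha
    obtain ⟨i, rfl⟩ := hσ a
    exact Finset.mem_image_of_mem σ (Finset.mem_filter.mpr ⟨Finset.mem_univ i,
      Nat.lt_of_not_le fun hi => h i hi ha⟩)
  have hcard := (Finset.card_le_card hsub).trans Finset.card_image_le
  rw [Fin.card_filter_val_lt] at hcard
  omega

theorem Function.Surjective.exists_le_val_apply_mem_Icc {m r p : ℕ} {σ : Fin m → Fin m}
    (hσ : Function.Surjective σ) (hp : p + r < m) :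
    ∃ i : Fin m, r ≤ (i : ℕ) ∧ (σ i : ℕ) ∈ Finset.Icc p (p + r) := by
  have hlt : ∀ j ∈ Finset.Icc p (p + r), j < m := fun j hj => by
    have := (Finset.mem_Icc.mp hj).2; omega
  obtain ⟨i, hi, hmem⟩ :=
    hσ.exists_le_val_apply_mem (r := r) (S := (Finset.Icc p (p + r)).attachFin hlt)
    (by rw [Finset.card_attachFin, Nat.card_Icc]; omega)
  exact ⟨i, hi, (Finset.mem_attachFin hlt).mp hmem⟩

theorem abs_sub_le_max_of_mem_Icc {G : Type*} [AddCommGroup G] [LinearOrder G]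
    [IsOrderedAddMonoid G] {a b y t : G} (hy : y ∈ Set.Icc a b) :
    |t - y| ≤ max (t - a) (b - t) := by
  rw [abs_sub_comm, max_comm]
  exact abs_sub_le_max_sub hy.1 hy.2 t

/-- the combinatorial distance estimate for the ordering permutation. -/
theorem stmt17 (m r : ℕ) (x : ℕ → ℝ)
    (hmono : ∀ i j : ℕ, i ≤ j → j ≤ m - 1 → x i ≤ x j)
    (t : ℝ)
    (σ : Fin m → Fin m) (hσ : Function.Bijective σ)
    (hord : ∀ i j : Fin m, i ≤ j → |t - x (σ i)| ≤ |t - x (σ j)|)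
    (p : ℕ) (hp : p + r + 2 ≤ m)
    (htp : x p < t) (htq : t < x (p + r)) :
    |t - x (σ ⟨r, by omega⟩)| ≤ max (t - x p) (x (p + r) - t) ∧
      max (t - x p) (x (p + r) - t) ≤ x (p + r) - x p := by
  obtain ⟨i, hri, hσi⟩ := hσ.surjective.exists_le_val_apply_mem_Icc (r := r) (p := p) (by omega)
  obtain ⟨hpi, hiq⟩ := Finset.mem_Icc.mp hσi
  have hxi : x (σ i) ∈ Set.Icc (x p) (x (p + r)) :=
    ⟨hmono _ _ hpi (by omega), hmono _ _ hiq (by omega)⟩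
  refine ⟨(hord _ i hri).trans (abs_sub_le_max_of_mem_Icc hxi), max_le ?_ ?_⟩ <;> linarith
end
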